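/- arXiv:2312.09616 — 2 statements merged into one kernel-verified Lean document; each statement's English description precedes it below -/
import Mathlib

section
/- Let (ŷ_{∞f},û_{∞f}) be an admissible pair on [0,+∞) for the dynamics f with ŷ_{∞f}(0) = x, whose trajectory is bounded (‖ŷ_{∞f}(t)‖ ≤ b for all t ≥ 0) and whose shifted costs ∫₀ᵀ w(ŷ_{∞f}(t),û_{∞f}(t)) dt are bounded uniformly in T ≥ 0. If strict dissipativity holds, then ŷ_{∞f}(t) → ȳ as t → +∞. -/
/-!
Strict dissipativity with a bounded storage function bounds `∫₀ᵀ α ‖(y - ȳ, u - ū)‖` uniformly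
in `T`. The pair stays in the compact set `B̄(0, b) × Ω`, where `f` is bounded, so `y` is
Lipschitz; hence whenever `‖y t - ȳ‖ ≥ ε` the integrand is at least `α (ε / 2)` on a window
`[t, t + δ]` of fixed length, which the convergence of the increasing integral rules out for
large `t`.
-/

open MeasureTheory Filter Topology Metric Set

noncomputable section

/-- Euclidean state/control spaces. -/
abbrev Euc (n : ℕ) := EuclideanSpace ℝ (Fin n)

/-- An admissible pair `(y,u)` on `[0,T]` for the dynamics `f` with control constraint set `Ω`:
`u` is measurable, `Ω`-valued a.e. on `[0,T]`, and `y t = y 0 + ∫₀ᵗ f (y s) (u s) ds` on `[0,T]`. -/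
def IsAdmissible {n p : ℕ} (f : Euc n → Euc p → Euc n) (Ω : Set (Euc p)) (T : ℝ)
    (y : ℝ → Euc n) (u : ℝ → Euc p) : Prop :=
  Measurable u ∧ (∀ᵐ t ∂(volume.restrict (Icc (0:ℝ) T)), u t ∈ Ω) ∧
  ∀ t ∈ Icc (0:ℝ) T, y t = y 0 + ∫ s in (0:ℝ)..t, f (y s) (u s)

/-- An admissible pair `(y,u)` on `[0,∞)` for the dynamics `f`. -/
def IsAdmissibleInf {n p : ℕ} (f : Euc n → Euc p → Euc n) (Ω : Set (Euc p))
    (y : ℝ → Euc n) (u : ℝ → Euc p) : Prop :=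
  Measurable u ∧ (∀ᵐ t ∂(volume.restrict (Ici (0:ℝ))), u t ∈ Ω) ∧
  ∀ t, 0 ≤ t → y t = y 0 + ∫ s in (0:ℝ)..t, f (y s) (u s)

/-- A class-K function: continuous, (strictly) increasing on `[0,∞)`, nonnegative, vanishing at `0`. -/
def IsClassK (α : ℝ → ℝ) : Prop :=
  ContinuousOn α (Ici 0) ∧ StrictMonoOn α (Ici 0) ∧ α 0 = 0 ∧ ∀ s ∈ Ici (0:ℝ), 0 ≤ α s

/-- Strict dissipativity at `(ȳ,ū)` with supply rate `w`, (bounded) storage function `S` and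
class-K function `α`. -/
def StrictlyDissipative {n p : ℕ} (f : Euc n → Euc p → Euc n) (Ω : Set (Euc p))
    (w : Euc n → Euc p → ℝ) (ybar : Euc n) (ubar : Euc p)
    (S : Euc n → ℝ) (α : ℝ → ℝ) : Prop :=
  (∃ M, ∀ x, |S x| ≤ M) ∧ IsClassK α ∧
  ∀ T > (0:ℝ), ∀ y u, IsAdmissible f Ω T y u →
    S (y T) + ∫ t in (0:ℝ)..T, α ‖(y t - ybar, u t - ubar)‖ ≤
      S (y 0) + ∫ t in (0:ℝ)..T, w (y t) (u t)

/-- The value function `v(T,x,z)` of the finite-horizon problem. -/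
def valueFn {n p : ℕ} (f : Euc n → Euc p → Euc n) (f0 : Euc n → Euc p → ℝ)
    (Ω : Set (Euc p)) (T : ℝ) (x z : Euc n) : ℝ :=
  sInf {c | ∃ y u, IsAdmissible f Ω T y u ∧ y 0 = x ∧ y T = z ∧
    c = ∫ t in (0:ℝ)..T, f0 (y t) (u t)}

/-- The value of the shifted infinite-horizon problem with dynamics `f`, running cost `w`
and initial state `x` (the cost of an admissible pair is the limit of its partial costs). -/
def vInf {n p : ℕ} (f : Euc n → Euc p → Euc n) (Ω : Set (Euc p))
    (w : Euc n → Euc p → ℝ) (x : Euc n) : ℝ :=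
  sInf {c | ∃ y u, IsAdmissibleInf f Ω y u ∧ y 0 = x ∧
    Tendsto (fun T => ∫ t in (0:ℝ)..T, w (y t) (u t)) atTop (𝓝 c)}

/-- Times at which `ybar` can be reached from `x` by an admissible pair for `f`. -/
def reachTimes {n p : ℕ} (f : Euc n → Euc p → Euc n) (Ω : Set (Euc p))
    (x ybar : Euc n) : Set ℝ :=
  {t | 0 ≤ t ∧ ∃ y u, IsAdmissible f Ω t y u ∧ y 0 = x ∧ y t = ybar}

/-- The minimum time to reach `ybar` from `x` with the dynamics `f`. -/
def minTime {n p : ℕ} (f : Euc n → Euc p → Euc n) (Ω : Set (Euc p))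
    (x ybar : Euc n) : ℝ :=
  sInf (reachTimes f Ω x ybar)

open scoped NNReal

theorem aestronglyMeasurable_primitive {E : Type*} [NormedAddCommGroup E] [NormedSpace ℝ E]
    (F : ℝ → E) :
    AEStronglyMeasurable (fun t => ∫ s in (0:ℝ)..t, F s) (volume.restrict (Ici 0)) := by
  set G := fun t => ∫ s in (0:ℝ)..t, F s
  -- `G` is continuous on `U`; off `U` the integral is undefined, so `G` takes the junk value `0`,
  -- except possibly at the single point `sup U`.
  set U := {t : ℝ | 0 ≤ t ∧ ∃ t' > t, IntervalIntegrable F volume 0 t'}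
  have hU : U.OrdConnected := ⟨fun a ha b ⟨_, t', hbt', hF⟩ t ht =>
    ⟨ha.1.trans ht.1, t', ht.2.trans_lt hbt', hF⟩⟩
  have hGU : ContinuousOn G U := by
    rintro t ⟨ht, t', htt', hF⟩
    have ht' : (0:ℝ) ≤ t' := ht.trans htt'.le
    have hG : ContinuousOn G (Icc 0 t') := by
      have hF' : IntegrableOn F (uIcc 0 t') := by
        rw [uIcc_of_le ht', integrableOn_Icc_iff_integrableOn_Ioc]
        exact hF.1
      simpa only [uIcc_of_le ht'] using intervalIntegral.continuousOn_primitive_interval hF'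
    refine (hG t ⟨ht, htt'.le⟩).mono_of_mem_nhdsWithin
      (mem_nhdsWithin.mpr ⟨Iio t', isOpen_Iio, htt', fun s hs => ⟨hs.2.1, le_of_lt hs.1⟩⟩)
  have hUc : MeasurableSet (Ici 0 \ U) := measurableSet_Ici.diff hU.measurableSet
  have hG0 : {t | t ∈ Ici 0 \ U ∧ G t ≠ 0}.Subsingleton := by
    rintro a ⟨⟨ha, haU⟩, hGa⟩ b ⟨⟨hb, hbU⟩, hGb⟩
    by_contra hab
    rcases lt_or_gt_of_ne hab with h | h
    · exact hGb (intervalIntegral.integral_undef fun hF => haU ⟨ha, b, h, hF⟩)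
    · exact hGa (intervalIntegral.integral_undef fun hF => hbU ⟨hb, a, h, hF⟩)
  have hGc : G =ᵐ[volume.restrict (Ici 0 \ U)] 0 := by
    refine (ae_restrict_iff' hUc).mpr ?_
    filter_upwards [measure_eq_zero_iff_ae_notMem.mp (hG0.measure_zero volume)] with t ht htU
    by_contra h
    exact ht ⟨htU, h⟩
  have hcover : Ici (0:ℝ) ⊆ U ∪ (Ici 0 \ U) := fun t ht => (em (t ∈ U)).imp id fun h => ⟨ht, h⟩
  exact (aestronglyMeasurable_union_iff.mpr ⟨hGU.aestronglyMeasurable hU.measurableSet,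
    aestronglyMeasurable_zero.congr hGc.symm⟩).mono_measure (Measure.restrict_mono hcover le_rfl)

section Admissible

variable {n p : ℕ} {f : Euc n → Euc p → Euc n} {Ω : Set (Euc p)} {y : ℝ → Euc n}
  {u : ℝ → Euc p}

theorem IsAdmissibleInf.isAdmissible (h : IsAdmissibleInf f Ω y u) (T : ℝ) :
    IsAdmissible f Ω T y u :=
  ⟨h.1, ae_restrict_of_ae_restrict_of_subset Icc_subset_Ici_self h.2.1,
    fun t ht => h.2.2 t ht.1⟩

theorem StrictlyDissipative.exists_integral_le {w : Euc n → Euc p → ℝ} {ybar : Euc n}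
    {ubar : Euc p} {S : Euc n → ℝ} {α : ℝ → ℝ} (hdis : StrictlyDissipative f Ω w ybar ubar S α)
    (hadm : IsAdmissibleInf f Ω y u) {M : ℝ}
    (hcost : ∀ T, 0 ≤ T → ∫ t in (0:ℝ)..T, w (y t) (u t) ≤ M) :
    ∃ C, ∀ T, 0 ≤ T → ∫ t in (0:ℝ)..T, α ‖(y t - ybar, u t - ubar)‖ ≤ C := by
  obtain ⟨⟨K, hK⟩, -, hdiss⟩ := hdis
  refine ⟨max (2 * K + M) 0, fun T hT => ?_⟩
  rcases hT.eq_or_lt with rfl | hT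
  · simp
  have hS0 := abs_le.mp (hK (y 0))
  have hST := abs_le.mp (hK (y T))
  linarith [hdiss T hT y u (hadm.isAdmissible T), hcost T hT.le, le_max_left (2 * K + M) 0]

theorem IsAdmissibleInf.aestronglyMeasurable (h : IsAdmissibleInf f Ω y u) :
    AEStronglyMeasurable y (volume.restrict (Ici 0)) :=
  (aestronglyMeasurable_const.add (aestronglyMeasurable_primitive _)).congr
    (EventuallyEq.symm ((ae_restrict_iff' measurableSet_Ici).mpr (ae_of_all _ h.2.2)))

theorem IsAdmissibleInf.ae_mem_closedBall_prod {b : ℝ} (h : IsAdmissibleInf f Ω y u)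
    (hb : ∀ t, 0 ≤ t → ‖y t‖ ≤ b) :
    ∀ᵐ t ∂(volume.restrict (Ici 0)), (y t, u t) ∈ closedBall 0 b ×ˢ Ω := by
  filter_upwards [h.2.1, ae_restrict_mem measurableSet_Ici] with t hu ht
  exact ⟨mem_closedBall_zero_iff.mpr (hb t ht), hu⟩

variable {E : Type*} [NormedAddCommGroup E] {b : ℝ} {φ : Euc n × Euc p → E}

theorem IsAdmissibleInf.exists_ae_norm_comp_le (h : IsAdmissibleInf f Ω y u)
    (hΩ : IsCompact Ω) (hb : ∀ t, 0 ≤ t → ‖y t‖ ≤ b) (hφ : Continuous φ) :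
    ∃ C : ℝ≥0, ∀ᵐ t ∂(volume.restrict (Ici 0)), ‖φ (y t, u t)‖ ≤ C := by
  obtain ⟨C, hC⟩ :=
    ((isCompact_closedBall 0 b).prod hΩ).exists_bound_of_continuousOn hφ.continuousOn
  refine ⟨C.toNNReal, ?_⟩
  filter_upwards [h.ae_mem_closedBall_prod hb] with t ht
  exact (hC _ ht).trans (Real.le_coe_toNNReal C)

theorem IsAdmissibleInf.intervalIntegrable_comp (h : IsAdmissibleInf f Ω y u)
    (hΩ : IsCompact Ω) (hb : ∀ t, 0 ≤ t → ‖y t‖ ≤ b) (hφ : Continuous φ) {s t : ℝ}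
    (hs : 0 ≤ s) (ht : 0 ≤ t) :
    IntervalIntegrable (fun r => φ (y r, u r)) volume s t := by
  obtain ⟨C, hC⟩ := h.exists_ae_norm_comp_le hΩ hb hφ
  have hsub : uIoc s t ⊆ Ici 0 := fun r hr => (le_min hs ht).trans (le_of_lt hr.1)
  rw [intervalIntegrable_iff]
  refine Integrable.mono' (integrableOn_const measure_Ioc_lt_top.ne)
    ((hφ.comp_aestronglyMeasurable (h.aestronglyMeasurable.prodMk
      h.1.aestronglyMeasurable)).mono_measure (Measure.restrict_mono hsub le_rfl))
    (ae_restrict_of_ae_restrict_of_subset hsub hC)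

theorem IsAdmissibleInf.lipschitzOnWith (h : IsAdmissibleInf f Ω y u) {L : ℝ≥0}
    (hL : ∀ᵐ t ∂(volume.restrict (Ici 0)), ‖f (y t) (u t)‖ ≤ L)
    (hint : ∀ t, 0 ≤ t → IntervalIntegrable (fun s => f (y s) (u s)) volume 0 t) :
    LipschitzOnWith L y (Ici 0) := by
  refine LipschitzOnWith.of_dist_le_mul fun s hs t ht => ?_
  have hsub : uIoc t s ⊆ Ici 0 := fun r hr => (le_min ht hs).trans (le_of_lt hr.1)
  rw [dist_eq_norm, h.2.2 s hs, h.2.2 t ht, add_sub_add_left_eq_sub,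
    intervalIntegral.integral_interval_sub_left (hint s hs) (hint t ht), Real.dist_eq]
  exact intervalIntegral.norm_integral_le_of_norm_le_const_ae
    ((ae_restrict_iff' measurableSet_uIoc).mp (ae_restrict_of_ae_restrict_of_subset hsub hL))

end Admissible

section Barbalat

variable {X : Type*} [PseudoMetricSpace X] {y : ℝ → X} {z : X} {g α : ℝ → ℝ} {L : ℝ≥0}

theorem le_integral_of_lipschitzOnWith_of_le_dist (hy : LipschitzOnWith L y (Ici 0))
    (hα : MonotoneOn α (Ici 0)) (hg : ∀ t, 0 ≤ t → α (dist (y t) z) ≤ g t)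
    {t δ ε : ℝ} (hgint : IntervalIntegrable g volume t (t + δ)) (ht : 0 ≤ t) (hδ : 0 ≤ δ)
    (hε : 0 ≤ ε) (hLδ : L * δ ≤ ε / 2) (hfar : ε ≤ dist (y t) z) :
    δ * α (ε / 2) ≤ ∫ s in t..t + δ, g s := by
  have hnear : ∀ s ∈ Icc t (t + δ), α (ε / 2) ≤ g s := by
    intro s hs
    have hs0 : 0 ≤ s := ht.trans hs.1
    have hmove : dist (y s) (y t) ≤ L * δ := by
      refine (hy.dist_le_mul s hs0 t ht).trans (mul_le_mul_of_nonneg_left ?_ L.2)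
      rw [Real.dist_eq, abs_of_nonneg (sub_nonneg.mpr hs.1)]
      linarith [hs.2]
    have hfar' : ε / 2 ≤ dist (y s) z := by
      linarith [dist_triangle_left (y t) z (y s)]
    exact (hα (mem_Ici.mpr (by positivity)) dist_nonneg hfar').trans (hg s hs0)
  calc δ * α (ε / 2) = ∫ _ in t..t + δ, α (ε / 2) := by simp
    _ ≤ ∫ s in t..t + δ, g s :=
      intervalIntegral.integral_mono_on (by linarith) intervalIntegrable_const hgint hnear

theorem tendsto_of_lipschitzOnWith_of_integral_le (hy : LipschitzOnWith L y (Ici 0))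
    (hα : StrictMonoOn α (Ici 0)) (hα0 : α 0 = 0) (hg : ∀ t, 0 ≤ t → α (dist (y t) z) ≤ g t)
    (hgint : ∀ s t, 0 ≤ s → 0 ≤ t → IntervalIntegrable g volume s t) {C : ℝ}
    (hC : ∀ T, 0 ≤ T → ∫ t in (0:ℝ)..T, g t ≤ C) :
    Tendsto y atTop (𝓝 z) := by
  set I := fun T => ∫ t in (0:ℝ)..T, g t
  have hg0 : ∀ t, 0 ≤ t → 0 ≤ g t := fun t ht =>
    hα0 ▸ (hα.monotoneOn self_mem_Ici dist_nonneg dist_nonneg).trans (hg t ht)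
  have hI : Monotone fun T => I (max T 0) := by
    intro a b hab
    have hab' : max a 0 ≤ max b 0 := max_le_max_right 0 hab
    rw [← sub_nonneg, intervalIntegral.integral_interval_sub_left
      (hgint 0 _ le_rfl (le_max_right b 0)) (hgint 0 _ le_rfl (le_max_right a 0))]
    exact intervalIntegral.integral_nonneg hab' fun s hs => hg0 s ((le_max_right a 0).trans hs.1)
  have hIbdd : BddAbove (range fun T => I (max T 0)) := ⟨C, by
    rintro _ ⟨T, rfl⟩
    exact hC _ (le_max_right T 0)⟩
  obtain ⟨ℓ, hℓ⟩ : ∃ ℓ, Tendsto I atTop (𝓝 ℓ) :=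
    ⟨_, (tendsto_atTop_ciSup hI hIbdd).congr' <|
      (eventually_ge_atTop 0).mono fun T hT => by simp only [max_eq_left hT]⟩
  rw [Metric.tendsto_nhds]
  intro ε hε
  set δ := ε / (2 * (L + 1)) with hδ
  have hδ0 : 0 < δ := by positivity
  have hLδ : L * δ ≤ ε / 2 := by
    rw [hδ, mul_div_assoc', div_le_div_iff₀ (by positivity) two_pos]
    nlinarith [L.2]
  have hαε : 0 < α (ε / 2) := hα0 ▸ hα self_mem_Ici (mem_Ici.mpr (half_pos hε).le) (half_pos hε)
  have hwindow : Tendsto (fun t => I (t + δ) - I t) atTop (𝓝 0) := by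
    simpa using (hℓ.comp (tendsto_atTop_add_const_right _ δ tendsto_id)).sub hℓ
  filter_upwards [hwindow.eventually (gt_mem_nhds (mul_pos hδ0 hαε)), eventually_ge_atTop 0]
    with t hsmall ht
  by_contra! hfar
  have hwin := le_integral_of_lipschitzOnWith_of_le_dist hy hα.monotoneOn hg
    (hgint t (t + δ) ht (by linarith)) ht hδ0.le hε.le hLδ hfar
  rw [← intervalIntegral.integral_interval_sub_left (hgint 0 _ le_rfl (by linarith))
    (hgint 0 t le_rfl ht)] at hwin
  linarith

end Barbalat

theorem infinite_horizon_trajectory_tendsto_turnpike_general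
    {n pp : ℕ}
    (f : Euc n → Euc pp → Euc n)
    (Ω : Set (Euc pp))
    (hf : ContDiff ℝ 1 (Function.uncurry f))
    (hΩcpt : IsCompact Ω)
    (ybar : Euc n) (ubar : Euc pp)
    -- shifted cost
    (w : Euc n → Euc pp → ℝ)
    (yf : ℝ → Euc n) (uf : ℝ → Euc pp)
    (hadm : IsAdmissibleInf f Ω yf uf)
    (b : ℝ) (hbnd : ∀ t, 0 ≤ t → ‖yf t‖ ≤ b)
    (M : ℝ) (hcst : ∀ T, 0 ≤ T → |∫ t in (0:ℝ)..T, w (yf t) (uf t)| ≤ M)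
    (S : Euc n → ℝ) (α : ℝ → ℝ)
    (hdis : StrictlyDissipative f Ω w ybar ubar S α) :
    Tendsto yf atTop (𝓝 ybar) := by
  obtain ⟨L, hL⟩ := hadm.exists_ae_norm_comp_le hΩcpt hbnd hf.continuous
  have hlip := hadm.lipschitzOnWith hL fun t ht =>
    hadm.intervalIntegrable_comp hΩcpt hbnd hf.continuous le_rfl ht
  obtain ⟨C, hC⟩ := hdis.exists_integral_le hadm fun T hT => (abs_le.mp (hcst T hT)).2
  obtain ⟨-, ⟨hαc, hαm, hα0, -⟩, -⟩ := hdis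
  have hcont : Continuous fun q : Euc n × Euc pp => α ‖(q.1 - ybar, q.2 - ubar)‖ :=
    hαc.comp_continuous (by fun_prop) fun _ => norm_nonneg _
  refine tendsto_of_lipschitzOnWith_of_integral_le hlip hαm hα0 (fun t _ => ?_)
    (fun s t hs ht => hadm.intervalIntegrable_comp hΩcpt hbnd hcont hs ht) hC
  exact hαm.monotoneOn dist_nonneg (norm_nonneg _)
    ((dist_eq_norm _ _).trans_le (norm_fst_le (yf t - ybar, uf t - ubar)))

/-- Lemma 5.5: a bounded admissible trajectory on `[0,∞)` with uniformly bounded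
shifted costs converges to the turnpike `ȳ` (forward dynamics `f`). -/
theorem infinite_horizon_trajectory_tendsto_turnpike
    {n pp : ℕ} (c : ℝ)
    (f : Euc n → Euc pp → Euc n) (f0 : Euc n → Euc pp → ℝ)
    (Ω : Set (Euc pp))
    (hf : ContDiff ℝ 1 (Function.uncurry f))
    (hf0 : ContDiff ℝ 1 (Function.uncurry f0))
    (hΩcpt : IsCompact Ω) (hΩball : Ω ⊆ closedBall 0 c)
    -- (ȳ,ū) is the unique minimizer of the static problem
    (ybar : Euc n) (ubar : Euc pp)
    (hfbar : f ybar ubar = 0)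
    (hstatmin : ∀ y u, f y u = 0 → f0 ybar ubar ≤ f0 y u)
    (hstatuniq : ∀ y u, f y u = 0 → f0 y u = f0 ybar ubar → y = ybar ∧ u = ubar)
    -- shifted cost
    (w : Euc n → Euc pp → ℝ) (hwdef : w = fun y u => f0 y u - f0 ybar ubar)
    (x : Euc n)
    (yf : ℝ → Euc n) (uf : ℝ → Euc pp)
    (hadm : IsAdmissibleInf f Ω yf uf) (hx0 : yf 0 = x)
    (b : ℝ) (hbnd : ∀ t, 0 ≤ t → ‖yf t‖ ≤ b)
    (M : ℝ) (hcst : ∀ T, 0 ≤ T → |∫ t in (0:ℝ)..T, w (yf t) (uf t)| ≤ M)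
    (S : Euc n → ℝ) (α : ℝ → ℝ)
    (hdis : StrictlyDissipative f Ω w ybar ubar S α) :
    Tendsto yf atTop (𝓝 ybar) :=
  infinite_horizon_trajectory_tendsto_turnpike_general f Ω hf hΩcpt ybar ubar w yf uf hadm b hbnd M
    hcst S α hdis
end
end

section
/- Let ȳ ∈ ℝⁿ, let α be a class-K function, and let y : [0,+∞) → ℝⁿ be a Lipschitz continuous curve with bounded range such that the integrals Φ(T) := ∫₀ᵀ α(‖y(t)−ȳ‖) dt are bounded uniformly in T ≥ 0. Then y(t) → ȳ as t → +∞. -/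
/-! If `y` stayed `ε`-far from `ȳ` at arbitrarily late times, then by the Lipschitz bound it would
stay `ε/2`-far on windows of a fixed length `δ` starting at those times, so each such window would
contribute at least `δ α(ε/2) > 0` to `Φ`. But `Φ` is nondecreasing and bounded, hence convergent,
so its increments over windows of length `δ` tend to `0`. -/

open MeasureTheory Filter Topology Metric Set

theorem IsClassK.monotoneOn {α : ℝ → ℝ} (hα : IsClassK α) : MonotoneOn α (Ici 0) :=
  hα.2.1.monotoneOn

theorem IsClassK.nonneg {α : ℝ → ℝ} (hα : IsClassK α) {s : ℝ} (hs : 0 ≤ s) : 0 ≤ α s :=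
  hα.2.2.2 s hs

theorem IsClassK.pos {α : ℝ → ℝ} (hα : IsClassK α) {s : ℝ} (hs : 0 < s) : 0 < α s :=
  hα.2.2.1 ▸ hα.2.1 self_mem_Ici hs.le hs

theorem IsClassK.continuousOn_comp_norm_sub {α : ℝ → ℝ} (hα : IsClassK α)
    {X E : Type*} [TopologicalSpace X] [SeminormedAddCommGroup E] {y : X → E} {s : Set X}
    (hy : ContinuousOn y s) (z : E) : ContinuousOn (fun t => α ‖y t - z‖) s :=
  hα.1.comp (hy.sub continuousOn_const).norm fun _ _ => norm_nonneg _

theorem tendsto_intervalIntegral_add_const_of_bounded {f : ℝ → ℝ}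
    (hf : LocallyIntegrableOn f (Ici 0)) (hf0 : ∀ t, 0 ≤ t → 0 ≤ f t) {M : ℝ}
    (hM : ∀ T, 0 ≤ T → ∫ t in (0:ℝ)..T, f t ≤ M) (δ : ℝ) :
    Tendsto (fun t => ∫ s in t..t + δ, f s) atTop (𝓝 0) := by
  have hIoc : ∀ T, IntegrableOn f (Ioc 0 T) := fun T =>
    (hf.integrableOn_compact_subset Icc_subset_Ici_self isCompact_Icc).mono_set Ioc_subset_Icc_self
  have hint : ∀ T, 0 ≤ T → IntervalIntegrable f volume 0 T := fun T hT =>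
    (intervalIntegrable_iff_integrableOn_Ioc_of_le hT).2 (hIoc T)
  have hIoi : IntegrableOn f (Ioi 0) := by
    refine integrableOn_Ioi_of_intervalIntegral_norm_bounded M 0 hIoc tendsto_id ?_
    filter_upwards [eventually_ge_atTop 0] with T hT
    rw [intervalIntegral.integral_congr fun x hx => Real.norm_of_nonneg <|
      hf0 x (uIcc_of_le hT ▸ hx).1]
    exact hM T hT
  have hΦ := intervalIntegral_tendsto_integral_Ioi 0 hIoi tendsto_id
  have hdiff := (hΦ.comp (tendsto_atTop_add_const_right _ δ tendsto_id)).sub hΦ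
  simp only [Function.comp_def, id, sub_self] at hdiff
  refine hdiff.congr' ?_
  filter_upwards [eventually_ge_atTop 0, eventually_ge_atTop (-δ)] with t ht htδ
  exact intervalIntegral.integral_interval_sub_left (hint _ (by linarith)) (hint t ht)

theorem IsClassK.mul_le_integral_of_lipschitzOnWith {α : ℝ → ℝ} (hα : IsClassK α)
    {E : Type*} [SeminormedAddCommGroup E] {y : ℝ → E} {z : E} {K : NNReal}
    (hy : LipschitzOnWith K y (Ici 0)) {t ε δ : ℝ} (ht : 0 ≤ t) (hδ : 0 ≤ δ)
    (hKδ : K * δ ≤ ε / 2) (hfar : ε ≤ ‖y t - z‖) :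
    δ * α (ε / 2) ≤ ∫ s in t..t + δ, α ‖y s - z‖ := by
  have hε : 0 ≤ ε / 2 := (mul_nonneg K.2 hδ).trans hKδ
  have hwindow : Icc t (t + δ) ⊆ Ici 0 := fun s hs => ht.trans hs.1
  have hlow : ∀ s ∈ Icc t (t + δ), α (ε / 2) ≤ α ‖y s - z‖ := by
    intro s hs
    have hclose : dist (y s) (y t) ≤ ε / 2 := calc
      dist (y s) (y t) ≤ K * dist s t := hy.dist_le_mul s (hwindow hs) t ht
      _ ≤ K * δ := by
        gcongr
        rw [Real.dist_eq, abs_of_nonneg (by linarith [hs.1])]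
        linarith [hs.2]
      _ ≤ ε / 2 := hKδ
    have hfar' : ε / 2 ≤ ‖y s - z‖ := by
      rw [← dist_eq_norm] at hfar ⊢
      linarith [dist_triangle_left (y t) z (y s)]
    exact hα.monotoneOn hε (norm_nonneg _) hfar'
  have hfi : IntervalIntegrable (fun s => α ‖y s - z‖) volume t (t + δ) :=
    ((hα.continuousOn_comp_norm_sub hy.continuousOn z).mono hwindow).intervalIntegrable_of_Icc
      (by linarith)
  have hmono := intervalIntegral.integral_mono_on (by linarith) intervalIntegrable_const hfi hlow
  rwa [intervalIntegral.integral_const, smul_eq_mul, add_sub_cancel_left] at hmono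

theorem lipschitz_bounded_dissipation_tendsto_general
    {n : ℕ} (ybar : EuclideanSpace ℝ (Fin n))
    (α : ℝ → ℝ) (hα : IsClassK α)
    (y : ℝ → EuclideanSpace ℝ (Fin n))
    (K : NNReal) (hLip : LipschitzOnWith K y (Ici 0))
    (M : ℝ) (hΦ : ∀ T, 0 ≤ T → (∫ t in (0:ℝ)..T, α ‖y t - ybar‖) ≤ M) :
    Tendsto y atTop (𝓝 ybar) := by
  have hf : LocallyIntegrableOn (fun t => α ‖y t - ybar‖) (Ici 0) :=
    (hα.continuousOn_comp_norm_sub hLip.continuousOn ybar).locallyIntegrableOn measurableSet_Ici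
  refine Metric.tendsto_atTop.2 fun ε hε => ?_
  set δ := ε / (2 * (K + 1))
  have hδ : 0 < δ := by positivity
  have hKδ : K * δ ≤ ε / 2 := calc
    K * δ ≤ (K + 1) * δ := by gcongr; linarith
    _ = ε / 2 := by simp only [δ]; field_simp
  have hsmall := (tendsto_intervalIntegral_add_const_of_bounded hf
    (fun _ _ => hα.nonneg (norm_nonneg _)) hΦ δ).eventually
    (gt_mem_nhds (mul_pos hδ (hα.pos (half_pos hε))))
  obtain ⟨N, hN⟩ := eventually_atTop.1 hsmall
  refine ⟨max N 0, fun t ht => ?_⟩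
  by_contra! hfar
  rw [dist_eq_norm] at hfar
  have := hα.mul_le_integral_of_lipschitzOnWith hLip (le_of_max_le_right ht) hδ.le hKδ hfar
  linarith [hN t (le_of_max_le_left ht)]

/-- If `y : [0,∞) → ℝⁿ` is Lipschitz with bounded range and the integrals
`Φ(T) = ∫₀ᵀ α(‖y(t)−ȳ‖) dt` are bounded uniformly in `T ≥ 0` for a class-K function `α`,
then `y(t) → ȳ` as `t → +∞`. -/
theorem lipschitz_bounded_dissipation_tendsto
    {n : ℕ} (ybar : EuclideanSpace ℝ (Fin n))
    (α : ℝ → ℝ) (hα : IsClassK α)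
    (y : ℝ → EuclideanSpace ℝ (Fin n))
    (K : NNReal) (hLip : LipschitzOnWith K y (Ici 0))
    (b : ℝ) (hbnd : ∀ t, 0 ≤ t → ‖y t‖ ≤ b)
    (M : ℝ) (hΦ : ∀ T, 0 ≤ T → (∫ t in (0:ℝ)..T, α ‖y t - ybar‖) ≤ M) :
    Tendsto y atTop (𝓝 ybar) :=
  lipschitz_bounded_dissipation_tendsto_general ybar α hα y K hLip M hΦ
end
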